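/- Consider the controlled Cucker–Smale system v̇_i = (1/N)·Σ_j a(‖x_j − x_i‖)(v_j − v_i) + u_i with the feedback control u_i(t) = −α·(v_i(t) − v̄), where α > 0 and v̄ is the (constant) mean velocity. Then: (i) the velocity variance satisfies V(t) ≤ V(0)·e^{−2αt} for all t ≥ 0; (ii) the spatial variance satisfies √(X(t)) ≤ √(X(0)) + √(V(0))/α for all t ≥ 0, so the solution converges to flocking; and (iii) if α·N·√(V(0)) ≤ M, then the control satisfies the bound Σ_{i=1}^N ‖u_i(t)‖ ≤ M for all t ≥ 0. -/

import Mathlib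

/-!
Let `P w` be the family of pairwise differences `(w i - w j)` in `L²`, scaled so that `‖P w‖²` is
the variance `(1 / (2 N²)) ∑ ‖w i - w j‖²`. Then `X = ‖P x‖²`, `V = ‖P v‖²`, and since `P` is
linear, `d/dt P x = P v`. The alignment force is symmetric in `(i, k)`, so its contribution to
`V' = 2 ⟪P v, P v'⟫` is a negative multiple of `∑ a(‖x k - x i‖) ‖v k - v i‖²`, while the feedback
contributes exactly `-2 α V`; hence `V' ≤ -2 α V` and `V` decays like `e^{-2αt}`. Consequently
`‖d/dt P x‖ = √V ≤ √(V 0) e^{-αt}`, which integrates to `√X ≤ √(X 0) + √(V 0) / α`, and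
Cauchy–Schwarz gives `∑ ‖u i‖ = α ∑ ‖v i - v̄‖ ≤ α N √V`.
-/

open Filter Finset Real RealInnerProductSpace

section PairDifferences

variable {ι E : Type*} [Fintype ι] [NormedAddCommGroup E] [InnerProductSpace ℝ E]

lemma sum_sum_inner_sub_sub (w z : ι → E) :
    ∑ i, ∑ j, ⟪w i - w j, z i - z j⟫ =
      2 * Fintype.card ι * ∑ i, ⟪w i, z i⟫ - 2 * ⟪∑ i, w i, ∑ i, z i⟫ := by
  simp only [inner_sub_left, inner_sub_right, sum_sub_distrib, sum_inner, inner_sum, sum_const,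
    card_univ, nsmul_eq_mul]
  rw [sum_comm (f := fun i j => ⟪w i, z j⟫), ← mul_sum]
  ring

lemma sum_sub_mean_eq_zero (w : ι → E) :
    ∑ i, (w i - (Fintype.card ι : ℝ)⁻¹ • ∑ k, w k) = 0 := by
  rcases isEmpty_or_nonempty ι with hι | hι
  · simp
  · rw [sum_sub_distrib, sum_const, card_univ, ← Nat.cast_smul_eq_nsmul ℝ, smul_smul,
      mul_inv_cancel₀ (by positivity), one_smul, sub_self]

lemma sum_alignment_eq_zero {ψ : ι → ι → ℝ} (hψ : ∀ i k, ψ i k = ψ k i) (w : ι → E) :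
    ∑ i, ∑ k, ψ i k • (w k - w i) = 0 := by
  have hswap : ∑ i, ∑ k, ψ i k • (w k - w i) = -∑ i, ∑ k, ψ i k • (w k - w i) := by
    conv_lhs => rw [sum_comm]
    rw [← sum_neg_distrib]
    refine sum_congr rfl fun i _ => ?_
    rw [← sum_neg_distrib]
    refine sum_congr rfl fun k _ => ?_
    rw [hψ, ← smul_neg, neg_sub]
  linear_combination (norm := module) (2⁻¹ : ℝ) • hswap

lemma sum_inner_alignment_nonpos {ψ : ι → ι → ℝ} (hψ : ∀ i k, ψ i k = ψ k i)
    (hψ₀ : ∀ i k, 0 ≤ ψ i k) (w : ι → E) :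
    ∑ i, ⟪w i, ∑ k, ψ i k • (w k - w i)⟫ ≤ 0 := by
  have hsymm : 2 * ∑ i, ⟪w i, ∑ k, ψ i k • (w k - w i)⟫ =
      -∑ i, ∑ k, ψ i k * ‖w k - w i‖ ^ 2 := by
    simp only [inner_sum, real_inner_smul_right]
    rw [two_mul]
    nth_rewrite 1 [sum_comm]
    simp only [← sum_add_distrib, ← sum_neg_distrib, hψ, ← real_inner_self_eq_norm_sq,
      inner_sub_left, inner_sub_right, real_inner_comm (w _) (w _)]
    refine sum_congr rfl fun i _ => sum_congr rfl fun k _ => ?_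
    ring
  have : 0 ≤ ∑ i, ∑ k, ψ i k * ‖w k - w i‖ ^ 2 :=
    sum_nonneg fun i _ => sum_nonneg fun k _ => mul_nonneg (hψ₀ i k) (sq_nonneg _)
  linarith

variable (ι E) in
noncomputable def pairDiff : (ι → E) →L[ℝ] PiLp 2 (fun _ : ι × ι => E) :=
  √(1 / (2 * (Fintype.card ι : ℝ) ^ 2)) •
    (PiLp.continuousLinearEquiv 2 ℝ (fun _ : ι × ι => E)).symm.toContinuousLinearMap.comp
      (ContinuousLinearMap.pi fun p : ι × ι =>
        ContinuousLinearMap.proj (R := ℝ) (φ := fun _ : ι => E) p.1 - ContinuousLinearMap.proj p.2)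

lemma pairDiff_apply (w : ι → E) (p : ι × ι) :
    pairDiff ι E w p = √(1 / (2 * (Fintype.card ι : ℝ) ^ 2)) • (w p.1 - w p.2) := rfl

lemma inner_pairDiff (w z : ι → E) :
    ⟪pairDiff ι E w, pairDiff ι E z⟫ =
      1 / (2 * (Fintype.card ι : ℝ) ^ 2) * ∑ i, ∑ j, ⟪w i - w j, z i - z j⟫ := by
  simp only [PiLp.inner_apply, Fintype.sum_prod_type, pairDiff_apply, real_inner_smul_left,
    real_inner_smul_right, ← mul_assoc, mul_sum,
    mul_self_sqrt (by positivity : (0 : ℝ) ≤ 1 / (2 * (Fintype.card ι : ℝ) ^ 2))]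

lemma norm_pairDiff_sq (w : ι → E) :
    ‖pairDiff ι E w‖ ^ 2 = 1 / (2 * (Fintype.card ι : ℝ) ^ 2) * ∑ i, ∑ j, ‖w i - w j‖ ^ 2 := by
  simp only [← real_inner_self_eq_norm_sq, inner_pairDiff]

lemma pairDiff_sub_const (w : ι → E) (m : E) :
    pairDiff ι E (fun i => w i - m) = pairDiff ι E w := by
  ext p
  simp only [pairDiff_apply, sub_sub_sub_cancel_right]

lemma inner_pairDiff_alignment_nonpos {ψ : ι → ι → ℝ} (hψ : ∀ i k, ψ i k = ψ k i)
    (hψ₀ : ∀ i k, 0 ≤ ψ i k) (w : ι → E) :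
    ⟪pairDiff ι E w, pairDiff ι E fun i => ∑ k, ψ i k • (w k - w i)⟫ ≤ 0 := by
  rw [inner_pairDiff, sum_sum_inner_sub_sub, sum_alignment_eq_zero hψ, inner_zero_right, mul_zero,
    sub_zero]
  exact mul_nonpos_of_nonneg_of_nonpos (by positivity)
    (mul_nonpos_of_nonneg_of_nonpos (by positivity) (sum_inner_alignment_nonpos hψ hψ₀ w))

lemma inner_pairDiff_alignment_add_feedback_le {a : ℝ → ℝ} (ha : ∀ s, 0 ≤ s → 0 ≤ a s)
    {r : ℝ} (hr : 0 ≤ r) (α : ℝ) (x w : ι → E) (m : E) :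
    ⟪pairDiff ι E w,
        pairDiff ι E fun i => r • ∑ k, a ‖x k - x i‖ • (w k - w i) + -α • (w i - m)⟫ ≤
      -α * ‖pairDiff ι E w‖ ^ 2 := by
  set A : ι → E := fun i => ∑ k, a ‖x k - x i‖ • (w k - w i)
  have hA : ⟪pairDiff ι E w, pairDiff ι E A⟫ ≤ 0 :=
    inner_pairDiff_alignment_nonpos (fun i k => by rw [norm_sub_rev])
      (fun i k => ha _ (norm_nonneg _)) w
  have hsplit : (pairDiff ι E fun i => r • A i + -α • (w i - m)) =
      r • pairDiff ι E A + -α • pairDiff ι E w := by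
    rw [← pairDiff_sub_const w m, ← map_smul, ← map_smul, ← map_add]
    rfl
  rw [hsplit, inner_add_right, real_inner_smul_right, real_inner_smul_right,
    real_inner_self_eq_norm_sq]
  linarith [mul_nonpos_of_nonneg_of_nonpos hr hA]

lemma norm_pairDiff_sq_of_sum_eq_zero {z : ι → E} (hz : ∑ i, z i = 0) :
    ‖pairDiff ι E z‖ ^ 2 = (Fintype.card ι : ℝ)⁻¹ * ∑ i, ‖z i‖ ^ 2 := by
  rw [← real_inner_self_eq_norm_sq, inner_pairDiff, sum_sum_inner_sub_sub, hz, inner_zero_left]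
  simp only [real_inner_self_eq_norm_sq, mul_zero, sub_zero]
  rcases isEmpty_or_nonempty ι with hι | hι
  · simp
  · field_simp

lemma sum_norm_sub_mean_le (w : ι → E) :
    ∑ i, ‖w i - (Fintype.card ι : ℝ)⁻¹ • ∑ k, w k‖ ≤ Fintype.card ι * ‖pairDiff ι E w‖ := by
  rcases isEmpty_or_nonempty ι with hι | hι
  · simp
  have hn : (0 : ℝ) < Fintype.card ι := by positivity
  have hvar := norm_pairDiff_sq_of_sum_eq_zero (sum_sub_mean_eq_zero w)
  set m : E := (Fintype.card ι : ℝ)⁻¹ • ∑ k, w k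
  rw [pairDiff_sub_const] at hvar
  calc ∑ i, ‖w i - m‖ = √((∑ i, ‖w i - m‖) ^ 2) := (sqrt_sq (by positivity)).symm
    _ ≤ √(Fintype.card ι * ∑ i, ‖w i - m‖ ^ 2) := sqrt_le_sqrt sq_sum_le_card_mul_sum_sq
    _ = Fintype.card ι * ‖pairDiff ι E w‖ := by
        rw [← sqrt_sq (by positivity : 0 ≤ Fintype.card ι * ‖pairDiff ι E w‖), mul_pow, hvar]
        field_simp

lemma HasDerivAt.pairDiff {w : ℝ → ι → E} {w' : ι → E} {t : ℝ} (h : HasDerivAt w w' t) :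
    HasDerivAt (fun s => _root_.pairDiff ι E (w s)) (_root_.pairDiff ι E w') t :=
  (_root_.pairDiff ι E).hasFDerivAt.comp_hasDerivAt t h

end PairDifferences

lemma hasDerivAt_exp_neg_mul (K s : ℝ) :
    HasDerivAt (fun s => exp (-(K * s))) (exp (-(K * s)) * -K) s := by
  simpa using ((hasDerivAt_id s).const_mul K).neg.exp

lemma le_mul_exp_of_hasDerivAt_le_mul {f f' : ℝ → ℝ} {K : ℝ} (hf : ∀ t, HasDerivAt f (f' t) t)
    (hf' : ∀ t, f' t ≤ K * f t) {t : ℝ} (ht : 0 ≤ t) : f t ≤ f 0 * exp (K * t) := by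
  have hg : ∀ s, HasDerivAt (fun s => f s * exp (-(K * s)))
      ((f' s - K * f s) * exp (-(K * s))) s := fun s =>
    ((hf s).mul (hasDerivAt_exp_neg_mul K s)).congr_deriv (by ring)
  have hanti : Antitone fun s => f s * exp (-(K * s)) :=
    antitone_of_hasDerivAt_nonpos hg fun s =>
      mul_nonpos_of_nonpos_of_nonneg (by linarith [hf' s]) (exp_pos _).le
  calc f t = f t * exp (-(K * t)) * exp (K * t) := by rw [mul_assoc, ← exp_add]; simp
    _ ≤ f 0 * exp (K * t) := by
      gcongr
      simpa using hanti ht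

lemma norm_le_norm_zero_add_of_norm_deriv_le_mul_exp {F : Type*} [NormedAddCommGroup F]
    [NormedSpace ℝ F] {f f' : ℝ → F} {α K : ℝ} (hα : 0 < α) (hf : ∀ t, HasDerivAt f (f' t) t)
    (hf' : ∀ t, 0 ≤ t → ‖f' t‖ ≤ K * exp (-(α * t))) {t : ℝ} (ht : 0 ≤ t) :
    ‖f t‖ ≤ ‖f 0‖ + K / α := by
  have hK : 0 ≤ K := by simpa using (norm_nonneg _).trans (hf' 0 le_rfl)
  have hB : ∀ s, HasDerivAt (fun s => ‖f 0‖ + K / α * (1 - exp (-(α * s))))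
      (K * exp (-(α * s))) s := fun s =>
    ((((hasDerivAt_exp_neg_mul α s).const_sub 1).const_mul (K / α)).const_add ‖f 0‖).congr_deriv
      (by field_simp)
  have hbound := image_norm_le_of_norm_deriv_right_le_deriv_boundary (a := 0) (b := t)
    (fun s _ => (hf s).continuousAt.continuousWithinAt) (fun s _ => (hf s).hasDerivWithinAt)
    (by simp) hB (fun s hs => hf' s hs.1) ⟨ht, le_rfl⟩
  have : K / α * (1 - exp (-(α * t))) ≤ K / α :=
    mul_le_of_le_one_right (by positivity) (by linarith [exp_pos (-(α * t))])
  linarith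

lemma sqrt_mul_exp_neg_two_mul {c : ℝ} (hc : 0 ≤ c) (α t : ℝ) :
    √(c * exp (-2 * α * t)) = √c * exp (-(α * t)) := by
  rw [sqrt_mul hc, show -2 * α * t = (2 : ℕ) * -(α * t) by push_cast; ring, exp_nat_mul,
    sqrt_sq (exp_pos _).le]

theorem controlled_cucker_smale_linear_feedback_general
    {d N : ℕ} (α M : ℝ) (hα : 0 < α)
    (a : ℝ → ℝ)
    (ha_pos : ∀ s, 0 ≤ s → 0 < a s)
    (x v : ℝ → Fin N → EuclideanSpace ℝ (Fin d))
    (u : ℝ → Fin N → EuclideanSpace ℝ (Fin d))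
    (hu : ∀ t i, u t i = -α • (v t i - (N : ℝ)⁻¹ • ∑ k, v t k))
    (hx : ∀ i t, HasDerivAt (fun s => x s i) (v t i) t)
    (hv : ∀ i t, HasDerivAt (fun s => v s i)
      ((N : ℝ)⁻¹ • ∑ j, a ‖x t j - x t i‖ • (v t j - v t i) + u t i) t)
    (X V : ℝ → ℝ)
    (hX : ∀ t, X t = (1 / (2 * (N : ℝ) ^ 2)) * ∑ i, ∑ j, ‖x t i - x t j‖ ^ 2)
    (hV : ∀ t, V t = (1 / (2 * (N : ℝ) ^ 2)) * ∑ i, ∑ j, ‖v t i - v t j‖ ^ 2) :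
    (∀ t ≥ (0 : ℝ), V t ≤ V 0 * Real.exp (-2 * α * t)) ∧
    (∀ t ≥ (0 : ℝ), Real.sqrt (X t) ≤ Real.sqrt (X 0) + Real.sqrt (V 0) / α) ∧
    Tendsto V atTop (nhds 0) ∧
    (α * N * Real.sqrt (V 0) ≤ M → ∀ t ≥ (0 : ℝ), ∑ i, ‖u t i‖ ≤ M) := by
  let P := pairDiff (Fin N) (EuclideanSpace ℝ (Fin d))
  have hXP t : X t = ‖P (x t)‖ ^ 2 := by rw [hX, norm_pairDiff_sq, Fintype.card_fin]
  have hVP t : V t = ‖P (v t)‖ ^ 2 := by rw [hV, norm_pairDiff_sq, Fintype.card_fin]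
  have hxd t : HasDerivAt x (v t) t := hasDerivAt_pi.2 fun i => hx i t
  have hvd t : HasDerivAt v (fun i =>
      (N : ℝ)⁻¹ • ∑ j, a ‖x t j - x t i‖ • (v t j - v t i) + u t i) t :=
    hasDerivAt_pi.2 fun i => hv i t
  have hdecay t (ht : 0 ≤ t) : V t ≤ V 0 * exp (-2 * α * t) := by
    rw [funext hVP]
    refine le_mul_exp_of_hasDerivAt_le_mul (fun t => (hvd t).pairDiff.norm_sq) (fun t => ?_) ht
    simp only [hu]
    linarith [inner_pairDiff_alignment_add_feedback_le (fun s hs => (ha_pos s hs).le)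
      (inv_nonneg.2 N.cast_nonneg) α (x t) (v t) ((N : ℝ)⁻¹ • ∑ k, v t k)]
  have hVnn t : 0 ≤ V t := by rw [hVP]; positivity
  refine ⟨hdecay, fun t ht => ?_, ?_, fun hM t ht => ?_⟩
  · have := norm_le_norm_zero_add_of_norm_deriv_le_mul_exp hα (fun s => (hxd s).pairDiff)
      (fun s hs => by
        rw [← sqrt_sq (norm_nonneg _), ← hVP, ← sqrt_mul_exp_neg_two_mul (hVnn 0)]
        exact sqrt_le_sqrt (hdecay s hs)) ht
    rwa [hXP, hXP, sqrt_sq (norm_nonneg _), sqrt_sq (norm_nonneg _)]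
  · have hlim : Tendsto (fun t => V 0 * exp (-2 * α * t)) atTop (nhds 0) := by
      simpa using (tendsto_exp_atBot.comp
        (tendsto_id.const_mul_atTop_of_neg (by linarith : -2 * α < 0))).const_mul (V 0)
    exact squeeze_zero' (Eventually.of_forall hVnn) ((eventually_ge_atTop 0).mono hdecay) hlim
  · have hVt : V t ≤ V 0 :=
      (hdecay t ht).trans (mul_le_of_le_one_right (hVnn 0) (exp_le_one_iff.2 (by nlinarith)))
    calc ∑ i, ‖u t i‖ = α * ∑ i, ‖v t i - (N : ℝ)⁻¹ • ∑ k, v t k‖ := by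
          simp only [hu, norm_smul, norm_neg, norm_of_nonneg hα.le, mul_sum]
      _ ≤ α * (N * √(V t)) := by
          gcongr
          rw [hVP, sqrt_sq (norm_nonneg _)]
          simpa only [Fintype.card_fin] using sum_norm_sub_mean_le (v t)
      _ ≤ α * N * √(V 0) := by rw [← mul_assoc]; gcongr
      _ ≤ M := hM

/-- For the controlled Cucker–Smale system with feedback control
`u_i(t) = −α·(v_i(t) − v̄)` (`α > 0`, `v̄` the invariant mean velocity):
(i) `V(t) ≤ V(0)·e^{−2αt}` for `t ≥ 0`; (ii) `√(X t) ≤ √(X 0) + √(V 0)/α` for `t ≥ 0`,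
so the solution converges to flocking; (iii) if `α·N·√(V 0) ≤ M` then
`Σ_i ‖u_i(t)‖ ≤ M` for all `t ≥ 0`. -/
theorem controlled_cucker_smale_linear_feedback
    {d N : ℕ} (hN : 0 < N) (α M : ℝ) (hα : 0 < α)
    (a : ℝ → ℝ)
    (ha_pos : ∀ s, 0 ≤ s → 0 < a s)
    (ha_anti : AntitoneOn a (Set.Ici 0))
    (ha_smooth : ContDiffOn ℝ 1 a (Set.Ici 0))
    (x v : ℝ → Fin N → EuclideanSpace ℝ (Fin d))
    (u : ℝ → Fin N → EuclideanSpace ℝ (Fin d))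
    (hu : ∀ t i, u t i = -α • (v t i - (N : ℝ)⁻¹ • ∑ k, v t k))
    (hx : ∀ i t, HasDerivAt (fun s => x s i) (v t i) t)
    (hv : ∀ i t, HasDerivAt (fun s => v s i)
      ((N : ℝ)⁻¹ • ∑ j, a ‖x t j - x t i‖ • (v t j - v t i) + u t i) t)
    (X V : ℝ → ℝ)
    (hX : ∀ t, X t = (1 / (2 * (N : ℝ) ^ 2)) * ∑ i, ∑ j, ‖x t i - x t j‖ ^ 2)
    (hV : ∀ t, V t = (1 / (2 * (N : ℝ) ^ 2)) * ∑ i, ∑ j, ‖v t i - v t j‖ ^ 2) :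
    (∀ t ≥ (0 : ℝ), V t ≤ V 0 * Real.exp (-2 * α * t)) ∧
    (∀ t ≥ (0 : ℝ), Real.sqrt (X t) ≤ Real.sqrt (X 0) + Real.sqrt (V 0) / α) ∧
    Tendsto V atTop (nhds 0) ∧
    (α * N * Real.sqrt (V 0) ≤ M → ∀ t ≥ (0 : ℝ), ∑ i, ‖u t i‖ ≤ M) :=
  controlled_cucker_smale_linear_feedback_general α M hα a ha_pos x v u hu hx hv X V hX hV
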